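/- Let n ≥ 2 be an integer and p > 0. Let f : [0,∞) × (0,∞) → (0,∞) be continuous and let u be a positive C¹ solution of the integral equation (IE). Then for every x ∈ ℝⁿ, every λ > 0, and every ξ ∈ ℝⁿ ∖ {0} with ξ ≠ x and ξ^{x,λ} ≠ 0, one has u_{x,λ}(ξ) − u(ξ) = ∫_{{z : |z−x| ≥ λ}} K(x,λ;ξ,z) · [ f(|z|, u(z)) − (λ/|z−x|)^{p+2n} f(|z^{x,λ}|, u(z^{x,λ})) ] dz. -/

import Mathlib

open MeasureTheory

noncomputable section

/-- Inversion of `ξ` about the sphere of radius `l` centered at `x`. -/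
def inversion {n : ℕ} (x : EuclideanSpace ℝ (Fin n)) (l : ℝ)
    (ξ : EuclideanSpace ℝ (Fin n)) : EuclideanSpace ℝ (Fin n) :=
  x + (l ^ 2 / ‖ξ - x‖ ^ 2) • (ξ - x)

/-- Kelvin-type transform of `u` about the sphere of radius `l` centered at `x`. -/
def kelvin {n : ℕ} (p : ℝ) (u : EuclideanSpace ℝ (Fin n) → ℝ)
    (x : EuclideanSpace ℝ (Fin n)) (l : ℝ) (ξ : EuclideanSpace ℝ (Fin n)) : ℝ :=
  (‖ξ - x‖ / l) ^ p * u (inversion x l ξ)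

/-- The kernel `K(x, l; ξ, z)` in the moving-spheres computation. -/
def kernelK {n : ℕ} (p : ℝ) (x : EuclideanSpace ℝ (Fin n)) (l : ℝ)
    (ξ z : EuclideanSpace ℝ (Fin n)) : ℝ :=
  (‖z - x‖ / l) ^ p * ‖ξ - inversion x l z‖ ^ p - ‖ξ - z‖ ^ p

/-!
Split the integral in (IE) into the ball `B(x, λ)` and its exterior, and pull the ball part back
to the exterior by the inversion `z ↦ z^{x,λ}`, whose Jacobian is `(λ / |z - x|)^{2n}`. With
`g = f(|·|, u)` this gives, for every `w ≠ 0`,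
`u(w) = ∫_{|z-x| ≥ λ} (|w - z|^p g(z) + (λ / |z - x|)^{2n} |w - z^{x,λ}|^p g(z^{x,λ})) dz`.
Applying it to `w = ξ^{x,λ}` and `w = ξ` and subtracting, the integrand regroups into the kernel
`K` by the similarity relations of inversion
`|ξ - x| |ξ^{x,λ} - z| = |z - x| |ξ - z^{x,λ}|` and
`|ξ - x| |ξ^{x,λ} - z^{x,λ}| = λ² |ξ - z| / |z - x|`.
-/

open Metric Module

theorem measurableSet_setOf_lt_norm_sub {V : Type*} [NormedAddCommGroup V] [MeasurableSpace V]
    [BorelSpace V] (x : V) (l : ℝ) : MeasurableSet {z : V | l < ‖z - x‖} :=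
  (isOpen_lt continuous_const (continuous_id.sub continuous_const).norm).measurableSet

namespace EuclideanGeometry

section Inversion

variable {V : Type*} [NormedAddCommGroup V] [InnerProductSpace ℝ V] {x ξ z : V} {l : ℝ}

theorem image_inversion_exterior (hl : 0 < l) :
    inversion x l '' {z | l < ‖z - x‖} = ball x l \ {x} := by
  have hinv := inversion_involutive x hl.ne'
  ext y
  rw [Set.image_eq_preimage_of_inverse hinv.leftInverse hinv.rightInverse]
  simp only [Set.mem_preimage, Set.mem_ofPred_eq, ← dist_eq_norm, dist_inversion_center,
    Set.mem_sdiff, mem_ball, Set.mem_singleton_iff]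
  rcases eq_or_ne y x with rfl | hyx
  · simp [hl.le]
  · have hd := dist_pos.2 hyx
    rw [lt_div_iff₀ hd]
    constructor
    · intro h; exact ⟨by nlinarith, hyx⟩
    · intro h; nlinarith [h.1]

theorem hasFDerivWithinAt_inversion_exterior (hl : 0 < l) :
    ∀ z ∈ {z : V | l < ‖z - x‖}, HasFDerivWithinAt (inversion x l)
      ((l / dist z x) ^ 2 • ((ℝ ∙ (z - x))ᗮ.reflection : V →L[ℝ] V)) {z | l < ‖z - x‖} z := by
  intro z hz
  exact (hasFDerivAt_inversion (sub_ne_zero.1 <| norm_pos_iff.1 <| hl.trans hz)).hasFDerivWithinAt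

theorem abs_det_fderiv_inversion [FiniteDimensional ℝ V] (hz : z ≠ x) (hl : 0 < l) :
    |((l / dist z x) ^ 2 • ((ℝ ∙ (z - x))ᗮ.reflection : V →L[ℝ] V)).det| =
      (l / ‖z - x‖) ^ (2 * finrank ℝ V) := by
  have hzx : z - x ≠ 0 := sub_ne_zero.2 hz
  have hrefl : (((ℝ ∙ (z - x))ᗮ.reflection : V →L[ℝ] V) : V →ₗ[ℝ] V) =
      ((ℝ ∙ (z - x))ᗮ.reflection).toLinearMap := rfl
  rw [ContinuousLinearMap.det, ContinuousLinearMap.toLinearMap_smul, LinearMap.det_smul, hrefl,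
    Submodule.det_reflection, Submodule.orthogonal_orthogonal, finrank_span_singleton hzx,
    dist_eq_norm, abs_mul, pow_one, abs_neg, abs_one, mul_one, ← pow_mul,
    abs_of_nonneg (by positivity), mul_comm]

theorem rpow_dist_center_mul_dist_inversion_comm (p : ℝ) (hl : 0 < l) (hξ : ξ ≠ x) (hz : z ≠ x) :
    (dist ξ x / l) ^ p * dist (inversion x l ξ) z ^ p =
      (dist z x / l) ^ p * dist ξ (inversion x l z) ^ p := by
  rw [← Real.mul_rpow (by positivity) dist_nonneg, ← Real.mul_rpow (by positivity) dist_nonneg,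
    div_mul_eq_mul_div, div_mul_eq_mul_div, mul_comm (dist ξ x), mul_comm (dist z x),
    dist_inversion_mul_dist_center_eq hξ hz]

theorem rpow_dist_center_mul_dist_inversion_inversion (p : ℝ) (hl : 0 < l) (hξ : ξ ≠ x)
    (hz : z ≠ x) :
    (dist ξ x / l) ^ p * dist (inversion x l ξ) (inversion x l z) ^ p =
      (l / dist z x) ^ p * dist ξ z ^ p := by
  have hξx := dist_pos.2 hξ
  have hzx := dist_pos.2 hz
  rw [← Real.mul_rpow (by positivity) dist_nonneg, ← Real.mul_rpow (by positivity) dist_nonneg,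
    dist_inversion_inversion hξ hz]
  congr 1
  field_simp

end Inversion

section ChangeOfVariables

variable {V F : Type*} [NormedAddCommGroup V] [InnerProductSpace ℝ V] [FiniteDimensional ℝ V]
  [MeasurableSpace V] [BorelSpace V] (μ : Measure V) [μ.IsAddHaarMeasure]
  [NormedAddCommGroup F] [NormedSpace ℝ F] {x : V} {l : ℝ}

theorem closedExterior_ae_eq_exterior (hl : 0 < l) :
    {z : V | l ≤ ‖z - x‖} =ᵐ[μ] {z | l < ‖z - x‖} := by
  refine ae_eq_set.2 ⟨measure_mono_null (fun z hz => ?_)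
    (Measure.addHaar_sphere_of_ne_zero μ x hl.ne'),
    measure_mono_null (fun z hz => ?_) measure_empty⟩
  · simp only [Set.mem_sdiff, Set.mem_ofPred_eq, not_lt] at hz
    simp [le_antisymm hz.2 hz.1]
  · simp only [Set.mem_sdiff, Set.mem_ofPred_eq, not_le] at hz
    exact absurd hz.1 (lt_asymm hz.2)

variable [Nontrivial V]

theorem ball_ae_eq_image_inversion_exterior (hl : 0 < l) :
    ball x l =ᵐ[μ] inversion x l '' {z | l < ‖z - x‖} := by
  rw [image_inversion_exterior hl]
  exact (sdiff_null_ae_eq_self (measure_singleton x)).symm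

theorem setIntegral_ball_eq_setIntegral_inversion (hl : 0 < l) (h : V → F) :
    ∫ y in ball x l, h y ∂μ =
      ∫ z in {z | l ≤ ‖z - x‖}, (l / ‖z - x‖) ^ (2 * finrank ℝ V) • h (inversion x l z) ∂μ := by
  rw [setIntegral_congr_set (ball_ae_eq_image_inversion_exterior μ hl),
    setIntegral_congr_set (closedExterior_ae_eq_exterior μ hl),
    integral_image_eq_integral_abs_det_fderiv_smul μ (measurableSet_setOf_lt_norm_sub x l)
      (hasFDerivWithinAt_inversion_exterior hl) (inversion_injective x hl.ne').injOn]
  refine setIntegral_congr_fun (measurableSet_setOf_lt_norm_sub x l) fun z hz => ?_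
  rw [abs_det_fderiv_inversion (sub_ne_zero.1 <| norm_pos_iff.1 <| hl.trans hz) hl]

theorem integrableOn_exterior_inversion (hl : 0 < l) {h : V → F}
    (hh : IntegrableOn h (ball x l) μ) :
    IntegrableOn (fun z => (l / ‖z - x‖) ^ (2 * finrank ℝ V) • h (inversion x l z))
      {z | l ≤ ‖z - x‖} μ := by
  have himage : IntegrableOn h (inversion x l '' {z | l < ‖z - x‖}) μ :=
    hh.congr_set_ae (ball_ae_eq_image_inversion_exterior μ hl).symm
  rw [integrableOn_image_iff_integrableOn_abs_det_fderiv_smul μ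
    (measurableSet_setOf_lt_norm_sub x l) (hasFDerivWithinAt_inversion_exterior hl)
    (inversion_injective x hl.ne').injOn] at himage
  rw [IntegrableOn, Measure.restrict_congr_set (closedExterior_ae_eq_exterior μ hl)]
  refine himage.congr_fun (fun z hz => ?_) (measurableSet_setOf_lt_norm_sub x l)
  dsimp only
  rw [abs_det_fderiv_inversion (sub_ne_zero.1 <| norm_pos_iff.1 <| hl.trans hz) hl]

theorem integral_eq_setIntegral_exterior_add_inversion (hl : 0 < l) {h : V → F}
    (hh : Integrable h μ) :
    ∫ y, h y ∂μ = ∫ z in {z | l ≤ ‖z - x‖},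
      (h z + (l / ‖z - x‖) ^ (2 * finrank ℝ V) • h (inversion x l z)) ∂μ := by
  have hcompl : (ball x l)ᶜ = {z | l ≤ ‖z - x‖} := by ext z; simp [dist_eq_norm]
  rw [← integral_add_compl measurableSet_ball hh, hcompl,
    setIntegral_ball_eq_setIntegral_inversion μ hl, add_comm,
    integral_add hh.integrableOn (integrableOn_exterior_inversion μ hl hh.integrableOn)]

theorem integrableOn_exterior_add_inversion (hl : 0 < l) {h : V → F} (hh : Integrable h μ) :
    IntegrableOn (fun z => h z + (l / ‖z - x‖) ^ (2 * finrank ℝ V) • h (inversion x l z))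
      {z | l ≤ ‖z - x‖} μ :=
  hh.integrableOn.add (integrableOn_exterior_inversion μ hl hh.integrableOn)

end ChangeOfVariables

end EuclideanGeometry

theorem inversion_eq_euclideanGeometry_inversion {n : ℕ} (x : EuclideanSpace ℝ (Fin n))
    (l : ℝ) : inversion x l = EuclideanGeometry.inversion x l := by
  ext1 ξ
  simp [inversion, EuclideanGeometry.inversion_def, dist_eq_norm, div_pow, add_comm,
    vsub_eq_sub, vadd_eq_add]

theorem kelvin_integrand_identity {n : ℕ} (p : ℝ) {x ξ z : EuclideanSpace ℝ (Fin n)} {l : ℝ}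
    (hl : 0 < l) (hξ : ξ ≠ x) (hz : z ≠ x) (a b : ℝ) :
    (‖ξ - x‖ / l) ^ p * (‖inversion x l ξ - z‖ ^ p * a + (l / ‖z - x‖) ^ (2 * n) *
        (‖inversion x l ξ - inversion x l z‖ ^ p * b)) -
      (‖ξ - z‖ ^ p * a + (l / ‖z - x‖) ^ (2 * n) * (‖ξ - inversion x l z‖ ^ p * b)) =
    kernelK p x l ξ z * (a - (l / ‖z - x‖) ^ (p + 2 * (n : ℝ)) * b) := by
  have hzx : 0 < ‖z - x‖ := norm_pos_iff.2 (sub_ne_zero.2 hz)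
  have h1 := EuclideanGeometry.rpow_dist_center_mul_dist_inversion_comm p hl hξ hz
  have h2 := EuclideanGeometry.rpow_dist_center_mul_dist_inversion_inversion p hl hξ hz
  rw [← inversion_eq_euclideanGeometry_inversion] at h1 h2
  simp only [dist_eq_norm] at h1 h2
  have h3 : (‖z - x‖ / l) ^ p * (l / ‖z - x‖) ^ p = 1 := by
    rw [← Real.mul_rpow (by positivity) (by positivity), div_mul_div_comm, mul_comm l,
      div_self (by positivity), Real.one_rpow]
  have h4 : (l / ‖z - x‖) ^ (p + 2 * (n : ℝ)) = (l / ‖z - x‖) ^ p * (l / ‖z - x‖) ^ (2 * n) := by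
    rw [Real.rpow_add (by positivity), show (2 : ℝ) * n = ((2 * n : ℕ) : ℝ) by push_cast; ring,
      Real.rpow_natCast]
  rw [kernelK, h4]
  linear_combination a * h1 + (l / ‖z - x‖) ^ (2 * n) * b * h2 +
    ‖ξ - inversion x l z‖ ^ p * (l / ‖z - x‖) ^ (2 * n) * b * h3

theorem stmt_6_general {n : ℕ} (p : ℝ)
    (f : ℝ → ℝ → ℝ)
    (u : EuclideanSpace ℝ (Fin n) → ℝ)
    (hu_pos : ∀ x : EuclideanSpace ℝ (Fin n), x ≠ 0 → 0 < u x)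
    (hIE : ∀ x : EuclideanSpace ℝ (Fin n), x ≠ 0 →
      u x = ∫ y : EuclideanSpace ℝ (Fin n), ‖x - y‖ ^ p * f ‖y‖ (u y)) :
    ∀ x : EuclideanSpace ℝ (Fin n), ∀ lam : ℝ, 0 < lam →
      ∀ ξ : EuclideanSpace ℝ (Fin n), ξ ≠ 0 → ξ ≠ x → inversion x lam ξ ≠ 0 →
        kelvin p u x lam ξ - u ξ =
          ∫ z in {z : EuclideanSpace ℝ (Fin n) | lam ≤ ‖z - x‖},
            kernelK p x lam ξ z *
              (f ‖z‖ (u z) -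
                (lam / ‖z - x‖) ^ (p + 2 * (n : ℝ)) *
                  f ‖inversion x lam z‖ (u (inversion x lam z))) := by
  intro x lam hlam ξ hξ0 hξx hinv0
  have : Nontrivial (EuclideanSpace ℝ (Fin n)) := nontrivial_of_ne ξ 0 hξ0
  -- An undefined Bochner integral is `0`, so `u w > 0` forces integrability in (IE).
  have hint : ∀ w, w ≠ 0 → Integrable (fun y => ‖w - y‖ ^ p * f ‖y‖ (u y)) := fun w hw =>
    Integrable.of_integral_ne_zero ((hIE w hw).symm ▸ (hu_pos w hw).ne')
  rw [kelvin, hIE _ hinv0, hIE ξ hξ0,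
    EuclideanGeometry.integral_eq_setIntegral_exterior_add_inversion volume hlam (hint _ hinv0),
    EuclideanGeometry.integral_eq_setIntegral_exterior_add_inversion volume hlam (hint ξ hξ0),
    ← integral_const_mul, ← integral_sub
      ((EuclideanGeometry.integrableOn_exterior_add_inversion volume hlam
        (hint _ hinv0)).const_mul _)
      (EuclideanGeometry.integrableOn_exterior_add_inversion volume hlam (hint ξ hξ0)),
    ← inversion_eq_euclideanGeometry_inversion]
  refine setIntegral_congr_fun (measurableSet_le measurable_const (by fun_prop)) fun z hz => ?_
  have hzx : z ≠ x := sub_ne_zero.1 <| norm_pos_iff.1 <| hlam.trans_le hz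
  simp only [finrank_euclideanSpace_fin, smul_eq_mul]
  exact kelvin_integrand_identity p hlam hξx hzx _ _

theorem stmt_6 {n : ℕ} (hn : 2 ≤ n) (p : ℝ) (hp : 0 < p)
    (f : ℝ → ℝ → ℝ)
    (hf_cont : ContinuousOn (fun q : ℝ × ℝ => f q.1 q.2) (Set.Ici 0 ×ˢ Set.Ioi 0))
    (hf_pos : ∀ α : ℝ, 0 ≤ α → ∀ β : ℝ, 0 < β → 0 < f α β)
    (u : EuclideanSpace ℝ (Fin n) → ℝ)
    (hu_pos : ∀ x : EuclideanSpace ℝ (Fin n), x ≠ 0 → 0 < u x)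
    (hu_C1 : ContDiffOn ℝ 1 u {(0 : EuclideanSpace ℝ (Fin n))}ᶜ)
    (hIE : ∀ x : EuclideanSpace ℝ (Fin n), x ≠ 0 →
      u x = ∫ y : EuclideanSpace ℝ (Fin n), ‖x - y‖ ^ p * f ‖y‖ (u y)) :
    ∀ x : EuclideanSpace ℝ (Fin n), ∀ lam : ℝ, 0 < lam →
      ∀ ξ : EuclideanSpace ℝ (Fin n), ξ ≠ 0 → ξ ≠ x → inversion x lam ξ ≠ 0 →
        kelvin p u x lam ξ - u ξ =
          ∫ z in {z : EuclideanSpace ℝ (Fin n) | lam ≤ ‖z - x‖},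
            kernelK p x lam ξ z *
              (f ‖z‖ (u z) -
                (lam / ‖z - x‖) ^ (p + 2 * (n : ℝ)) *
                  f ‖inversion x lam z‖ (u (inversion x lam z))) :=
  stmt_6_general p f u hu_pos hIE
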